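/- Let A be a finite set of nonnegative integers with 0 ∈ A, and A(X) = Σ_{a∈A} X^a its mask polynomial. If A tiles ℤ (i.e. ℤ = A ⊕ B for some B ⊆ ℤ), then condition (T1) holds: A(1) = ∏_{s ∈ S_A} Φ_s(1), where S_A is the set of prime powers p^a such that Φ_{p^a}(X) divides A(X). -/

import Mathlib

/-!
If `A ⊕ B = ℤ`, then `n ∈ B` iff no `n - a` with `0 ≠ a ∈ A` lies in `B`, so the window
`B ∩ [t, t + max A]` determines the next window; as there are finitely many windows, `B` is
`s`-periodic for some `s > 0`. Then `A ⊕ (B ∩ [0, s))` tiles `ℤ/sℤ`, i.e.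
`A(X) B_s(X) ≡ 1 + X + ⋯ + X^(s-1) mod X^s - 1`. Hence `A(1) B_s(1) = s`, and every `Φ_d`
with `1 < d ∣ s` divides `A` or `B_s`. Since `s = ∏ Φ_(p^k)(1)` over the prime powers `p^k ∣ s`
and distinct cyclotomic factors of a polynomial divide it jointly, `∏_{S_A} Φ_t(1) ∣ A(1)` and
`∏ Φ_(p^k)(1) ∣ B_s(1)` over the prime powers `p^k ∣ s` with `Φ_(p^k) ∣ B_s`, while the
product of these two divisors is a multiple of `A(1) B_s(1)`; so both are equalities.
-/

open Polynomial Finset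

theorem Function.exists_periodic_of_eq_imp_eq_add_one {β : Type*} [Finite β] (W : ℤ → β)
    (hW : ∀ t t', W t = W t' → W (t + 1) = W (t' + 1)) :
    ∃ s : ℕ, 0 < s ∧ Function.Periodic W s := by
  obtain ⟨F, hF⟩ : ∃ F : β → β, ∀ t, W (t + 1) = F (W t) :=
    ⟨fun b => W (Classical.epsilon (W · = b) + 1),
      fun t => hW _ _ (Classical.epsilon_spec (p := (W · = W t)) ⟨t, rfl⟩).symm⟩
  -- Every value of `W` lies in the range of every iterate `F^[m]`, so a repetition
  -- `F^[m] = F^[m']` among the finitely many maps `β → β` yields the period `m' - m`.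
  have hiter : ∀ t (m : ℕ), W (t + m) = F^[m] (W t) := by
    intro t m
    induction m with
    | zero => simp
    | succ m ih => rw [Function.iterate_succ_apply', ← ih, Nat.cast_succ, ← add_assoc, hF]
  obtain ⟨m, m', hne, heq⟩ := Finite.exists_ne_map_eq_of_infinite (fun m : ℕ => F^[m])
  wlog hlt : m < m' generalizing m m'
  · exact this m' m (Ne.symm hne) heq.symm (by omega)
  refine ⟨m' - m, by omega, fun t => ?_⟩
  calc W (t + ↑(m' - m)) = W (t - m + m') := by push_cast [Nat.cast_sub hlt.le]; ring_nf
    _ = W (t - m + m) := by rw [hiter, hiter, heq]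
    _ = W t := by rw [sub_add_cancel]

def IsTiling (A : Finset ℕ) (B : Set ℤ) : Prop :=
  ∀ n : ℤ, ∃! p : ℤ × ℤ, (∃ a ∈ A, (a : ℤ) = p.1) ∧ p.2 ∈ B ∧ p.1 + p.2 = n

open scoped Classical in
/-- `B ∩ [0, s)`: a set of representatives of `B` modulo `s` when `B` is `s`-periodic. -/
noncomputable def residues (B : Set ℤ) (s : ℕ) : Finset ℕ := {b ∈ range s | (b : ℤ) ∈ B}

namespace IsTiling

variable {A : Finset ℕ} {B : Set ℤ}

theorem exists_add_eq (h : IsTiling A B) (n : ℤ) : ∃ a ∈ A, ∃ b ∈ B, (a : ℤ) + b = n := by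
  obtain ⟨⟨-, b⟩, ⟨⟨a, ha, rfl⟩, hb, hn⟩, -⟩ := h n
  exact ⟨a, ha, b, hb, hn⟩

theorem eq_of_add_eq (h : IsTiling A B) {a a' : ℕ} {b b' : ℤ} (ha : a ∈ A) (ha' : a' ∈ A)
    (hb : b ∈ B) (hb' : b' ∈ B) (e : (a : ℤ) + b = a' + b') : a = a' ∧ b = b' := by
  obtain ⟨p, -, hp⟩ := h (a' + b')
  have := (hp (a, b) ⟨⟨a, ha, rfl⟩, hb, e⟩).trans (hp (a', b') ⟨⟨a', ha', rfl⟩, hb', rfl⟩).symm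
  simpa only [Prod.mk.injEq, Nat.cast_inj] using this

theorem mem_iff_forall_sub_notMem (h : IsTiling A B) (h0 : 0 ∈ A) (n : ℤ) :
    n ∈ B ↔ ∀ a ∈ A, a ≠ 0 → n - a ∉ B := by
  refine ⟨fun hn a ha ha0 hna => ha0 (h.eq_of_add_eq ha h0 hna hn (by simp)).1, fun hn => ?_⟩
  obtain ⟨a, ha, b, hb, rfl⟩ := h.exists_add_eq n
  by_cases ha0 : a = 0
  · simpa [ha0] using hb
  · exact absurd (by simpa using hb) (hn a ha ha0)

theorem exists_periodic (h : IsTiling A B) (h0 : 0 ∈ A) :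
    ∃ s : ℕ, 0 < s ∧ Function.Periodic (· ∈ B) (s : ℤ) := by
  set D := A.sup id + 1
  set W : ℤ → Fin D → Prop := fun t i => t + (i : ℕ) ∈ B
  have hdet : ∀ t t', W t = W t' → W (t + 1) = W (t' + 1) := by
    intro t t' htt'
    have hwin : ∀ j < D, (t + j ∈ B ↔ t' + j ∈ B) := fun j hj => by
      simpa [W] using congrFun htt' ⟨j, hj⟩
    funext i
    refine propext (show t + 1 + (i : ℕ) ∈ B ↔ t' + 1 + (i : ℕ) ∈ B from ?_)
    rcases Nat.lt_or_ge (i + 1) D with hi | hi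
    · simpa [add_assoc, add_comm (1 : ℤ)] using hwin (i + 1) hi
    · rw [h.mem_iff_forall_sub_notMem h0, h.mem_iff_forall_sub_notMem h0]
      refine forall₂_congr fun a ha => imp_congr_right fun ha0 => not_congr ?_
      have haD : a ≤ A.sup id := le_sup (f := id) ha
      have e : ∀ u : ℤ, u + 1 + (i : ℕ) - a = u + (D - a : ℕ) := fun u => by
        push_cast [Nat.cast_sub (by omega : a ≤ D)]; omega
      rw [e, e]
      exact hwin (D - a) (by omega)
  obtain ⟨s, hs, hW⟩ := Function.exists_periodic_of_eq_imp_eq_add_one W hdet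
  exact ⟨s, hs, fun n => by simpa [W] using congrFun (hW n) ⟨0, by omega⟩⟩

theorem bijOn_add_mod (h : IsTiling A B) {s : ℕ} (hs : 0 < s)
    (hB : Function.Periodic (· ∈ B) (s : ℤ)) :
    Set.BijOn (fun q : ℕ × ℕ => (q.1 + q.2) % s) ↑(A ×ˢ residues B s) ↑(range s) := by
  have mem_residues : ∀ c, c ∈ residues B s ↔ c < s ∧ (c : ℤ) ∈ B := by simp [residues]
  have sub_mul_mem : ∀ x k : ℤ, x - k * s ∈ B ↔ x ∈ B := fun x k => by
    simpa using hB.sub_int_mul_eq (x := x) k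
  refine ⟨fun q _ => mem_range.2 (Nat.mod_lt _ hs), ?_, ?_⟩
  · rintro ⟨a, b⟩ hab ⟨a', b'⟩ hab' hmod
    simp only [coe_product, Set.mem_prod, mem_coe, mem_residues] at hab hab' hmod
    obtain ⟨ha, hbs, hb⟩ := hab
    obtain ⟨ha', hbs', hb'⟩ := hab'
    obtain ⟨k, hk⟩ := Nat.modEq_iff_dvd.1 hmod
    have hbk : (b' : ℤ) - k * s ∈ B := (sub_mul_mem _ k).2 hb'
    obtain ⟨rfl, hbb⟩ := h.eq_of_add_eq ha ha' hb hbk (by push_cast at hk; linarith)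
    have hmodb : b ≡ b' [MOD s] :=
      Int.natCast_modEq_iff.1 (Int.modEq_iff_dvd.2 ⟨k, by rw [hbb]; ring⟩)
    rw [hmodb.eq_of_lt_of_lt hbs hbs']
  · intro r hr
    obtain ⟨a, ha, b, hb, hab⟩ := h.exists_add_eq r
    have hs' : (0 : ℤ) < s := by exact_mod_cast hs
    set c := (b % s).toNat
    have hc : (c : ℤ) = b % s := Int.toNat_of_nonneg (Int.emod_nonneg b hs'.ne')
    refine ⟨(a, c), ?_, ?_⟩
    · simp only [coe_product, Set.mem_prod, mem_coe, mem_residues]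
      refine ⟨ha, by have := Int.emod_lt_of_pos b hs'; omega, ?_⟩
      rwa [hc, Int.emod_def, mul_comm, sub_mul_mem]
    · have : a + c ≡ r [MOD s] := Int.natCast_modEq_iff.1 (by
        unfold Int.ModEq; push_cast; rw [hc, Int.add_emod_emod, hab])
      exact Eq.trans this (Nat.mod_eq_of_lt (mem_range.1 hr))

theorem card_mul_card_residues (h : IsTiling A B) {s : ℕ} (hs : 0 < s)
    (hB : Function.Periodic (· ∈ B) (s : ℤ)) : #A * #(residues B s) = s := by
  have hbij := h.bijOn_add_mod hs hB
  rw [← card_product, card_nbij _ hbij.mapsTo hbij.injOn hbij.surjOn, card_range]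

end IsTiling

theorem X_pow_sub_one_dvd_mul_sub_geom_sum {R : Type*} [CommRing R] {A C : Finset ℕ} {s : ℕ}
    (hbij : Set.BijOn (fun q : ℕ × ℕ => (q.1 + q.2) % s) ↑(A ×ˢ C) ↑(range s)) :
    (X ^ s - 1 : R[X]) ∣ (∑ a ∈ A, X ^ a) * (∑ c ∈ C, X ^ c) - ∑ i ∈ range s, X ^ i := by
  have hprod : (∑ a ∈ A, (X : R[X]) ^ a) * (∑ c ∈ C, X ^ c) =
      ∑ q ∈ A ×ˢ C, X ^ (q.1 + q.2) := by
    simp only [sum_mul_sum, sum_product, pow_add]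
  have hgeom : ∑ i ∈ range s, (X : R[X]) ^ i = ∑ q ∈ A ×ˢ C, X ^ ((q.1 + q.2) % s) :=
    (sum_nbij _ hbij.mapsTo hbij.injOn hbij.surjOn fun _ _ => rfl).symm
  rw [hprod, hgeom, ← sum_sub_distrib]
  refine dvd_sum fun q _ => ?_
  have e : (X : R[X]) ^ (q.1 + q.2) - X ^ ((q.1 + q.2) % s) =
      X ^ ((q.1 + q.2) % s) * (X ^ (s * ((q.1 + q.2) / s)) - 1) := by
    rw [mul_sub, ← pow_add, Nat.mod_add_div, mul_one]
  rw [e]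
  exact dvd_mul_of_dvd_right (pow_one_sub_dvd_pow_mul_sub_one X s _) _

theorem prod_cyclotomic_dvd {p : ℤ[X]} {T : Finset ℕ} (h : ∀ t ∈ T, cyclotomic t ℤ ∣ p) :
    ∏ t ∈ T, cyclotomic t ℤ ∣ p := by
  -- Divisibility by a monic polynomial can be checked in `ℚ[X]`, where distinct cyclotomic
  -- polynomials are coprime.
  rw [← map_dvd_map (Int.castRingHom ℚ) Int.cast_injective
    (monic_prod_of_monic _ _ fun t _ => cyclotomic.monic t ℤ), Polynomial.map_prod]
  refine prod_dvd_of_coprime (fun i _ j _ hij => ?_) fun t ht => Polynomial.map_dvd _ (h t ht)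
  simpa only [Function.onFun, map_cyclotomic_int] using cyclotomic.isCoprime_rat hij

theorem prod_eval_one_cyclotomic_dvd {p : ℤ[X]} {T : Finset ℕ}
    (h : ∀ t ∈ T, cyclotomic t ℤ ∣ p) : ∏ t ∈ T, (cyclotomic t ℤ).eval 1 ∣ p.eval 1 := by
  simpa only [eval_prod] using eval_dvd (x := 1) (prod_cyclotomic_dvd h)

theorem prod_primePow_divisors_eval_one_cyclotomic {s : ℕ} (hs : 0 < s) :
    ∏ d ∈ s.divisors with IsPrimePow d, (cyclotomic d ℤ).eval 1 = s := by
  have hgeom := congrArg (eval 1) (prod_cyclotomic_eq_geom_sum hs ℤ)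
  simp only [eval_prod, eval_finsetSum, eval_pow, eval_X, one_pow, sum_const, card_range,
    nsmul_eq_mul, mul_one] at hgeom
  rw [← hgeom, ← erase_eq_of_notMem (s := {d ∈ s.divisors | IsPrimePow d}) (a := 1)
    (by simp [not_isPrimePow_one]), ← filter_erase]
  refine prod_filter_of_ne fun d hd hne => ?_
  by_contra hd'
  refine hne (eval_one_cyclotomic_not_prime_pow fun {p} hp k hk => ?_)
  rcases k with _ | k
  · exact (mem_erase.1 hd).1 (by simpa using hk.symm)
  · exact hd' ⟨p, k + 1, hp.prime, k.succ_pos, hk⟩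

theorem cyclotomic_dvd_or_dvd_of_X_pow_sub_one_dvd {P Q : ℤ[X]} {s d : ℕ}
    (hcong : X ^ s - 1 ∣ P * Q - ∑ i ∈ range s, X ^ i) (hd : d ∈ s.divisors) (hd1 : d ≠ 1) :
    cyclotomic d ℤ ∣ P ∨ cyclotomic d ℤ ∣ Q := by
  have hdvd := cyclotomic_dvd_geom_sum_of_dvd ℤ (Nat.dvd_of_mem_divisors hd) hd1
  have hprime : Prime (cyclotomic d ℤ) :=
    (cyclotomic.irreducible (Nat.pos_of_mem_divisors hd)).prime
  exact hprime.dvd_or_dvd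
    ((dvd_sub_left hdvd).1 ((hdvd.trans (Dvd.intro _ (geom_sum_mul X s))).trans hcong))

theorem Int.eq_of_dvd_of_dvd_of_mul_dvd {a b x y : ℤ} (ha : 0 ≤ a) (hb : 0 ≤ b)
    (hab : a * b ≠ 0) (hx : 0 ≤ x) (hy : 0 ≤ y) (hxa : x ∣ a) (hyb : y ∣ b)
    (h : a * b ∣ x * y) : a = x := by
  have ha₀ : 0 < a := ha.lt_of_ne (by rintro rfl; simp at hab)
  have hb₀ : 0 < b := hb.lt_of_ne (by rintro rfl; simp at hab)
  have hx₀ : 0 < x := hx.lt_of_ne (by rintro rfl; simp at hxa; omega)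
  have hy₀ : 0 < y := hy.lt_of_ne (by rintro rfl; simp at hyb; omega)
  have hxa' := Int.le_of_dvd ha₀ hxa
  have hyb' := Int.le_of_dvd hb₀ hyb
  have hab' := Int.le_of_dvd (mul_pos hx₀ hy₀) h
  nlinarith

/-- Coven–Meyerowitz Theorem B1: if a finite set `A ⊆ ℤ_{≥0}` with `0 ∈ A` tiles `ℤ`, then
`(T1)` holds: `A(1) = ∏_{s ∈ S_A} Φ_s(1)`. -/
theorem stmt_9 (A : Finset ℕ) (h0 : 0 ∈ A)
    (P : ℤ[X]) (hP : P = ∑ a ∈ A, X ^ a)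
    (B : Set ℤ)
    (htile : ∀ n : ℤ, ∃! p : ℤ × ℤ, (∃ a ∈ A, (a : ℤ) = p.1) ∧ p.2 ∈ B ∧ p.1 + p.2 = n)
    (S : Set ℕ) (hS : S = {s : ℕ | IsPrimePow s ∧ cyclotomic s ℤ ∣ P})
    (hfin : S.Finite) :
    P.eval 1 = ∏ s ∈ hfin.toFinset, (cyclotomic s ℤ).eval 1 := by
  classical
  obtain ⟨s, hs, hB⟩ := IsTiling.exists_periodic htile h0
  set Q : ℤ[X] := ∑ c ∈ residues B s, X ^ c
  have hcong : (X ^ s - 1 : ℤ[X]) ∣ P * Q - ∑ i ∈ range s, X ^ i :=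
    hP ▸ X_pow_sub_one_dvd_mul_sub_geom_sum (IsTiling.bijOn_add_mod htile hs hB)
  have hPe : P.eval 1 = #A := by simp [hP, eval_finsetSum]
  have hQe : Q.eval 1 = #(residues B s) := by simp [Q, eval_finsetSum]
  have hPQ : P.eval 1 * Q.eval 1 = s := by
    rw [hPe, hQe]
    exact_mod_cast IsTiling.card_mul_card_residues htile hs hB
  set T := {d ∈ s.divisors | IsPrimePow d ∧ cyclotomic d ℤ ∣ Q}
  have hsub : {d ∈ s.divisors | IsPrimePow d} ⊆ hfin.toFinset ∪ T := by
    intro d hd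
    obtain ⟨hds, hd⟩ := mem_filter.1 hd
    rcases cyclotomic_dvd_or_dvd_of_X_pow_sub_one_dvd hcong hds hd.ne_one with hP' | hQ'
    · exact mem_union_left _ (hfin.mem_toFinset.2 (hS ▸ ⟨hd, hP'⟩))
    · exact mem_union_right _ (mem_filter.2 ⟨hds, hd, hQ'⟩)
  refine Int.eq_of_dvd_of_dvd_of_mul_dvd (hPe ▸ Nat.cast_nonneg _) (hQe ▸ Nat.cast_nonneg _)
    (by rw [hPQ]; exact_mod_cast hs.ne') (prod_nonneg fun _ _ => cyclotomic_nonneg _ le_rfl)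
    (prod_nonneg fun _ _ => cyclotomic_nonneg _ le_rfl)
    (prod_eval_one_cyclotomic_dvd fun t ht => (hS ▸ hfin.mem_toFinset.1 ht).2)
    (prod_eval_one_cyclotomic_dvd (T := T) fun t ht => (mem_filter.1 ht).2.2) ?_
  rw [hPQ, ← prod_primePow_divisors_eval_one_cyclotomic hs, ← prod_union_inter]
  exact (prod_dvd_prod_of_subset _ _ _ hsub).mul_right _
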